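/- For every number of layers L, every choice of layer data as in the EIGN recursion, every orientation O, and every bijection π : E → E with permutation matrix P, the EIGN outputs computed on the permuted graph with the permuted orientation O_π and permuted inputs satisfy H^L_{equ,π}(P · X_equ, P · X_inv, O_π) = P · H^L_equ(X_equ, X_inv, O) and H^L_{inv,π}(P · X_equ, P · X_inv, O_π) = P · H^L_inv(X_equ, X_inv, O); that is, both EIGN outputs are permutation equivariant mappings. -/

import Mathlib

/-!
Relabelling the edges along `e : E' ≃ E` replaces each boundary operator `B` by
`B.submatrix id e` and each edge feature matrix `H` by `H.submatrix e id`. Every step of the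
recursion either contracts over the edge index, where the two relabellings cancel, or acts row by
row (right multiplication by weights, sums, Hadamard products, entrywise activations), which
commutes with relabelling rows. Hence each layer, and by induction the whole network, commutes
with relabelling; the permutation matrix `P` is the relabelling along `π⁻¹`.
-/

open Matrix

/-- `O` assigns to each edge either its endpoint pair `(s e, t e)` or the reversed pair. -/
def IsOrientation {V E : Type*} (s t : E → V) (O : E → V × V) : Prop :=
  ∀ e, O e = (s e, t e) ∨ O e = (t e, s e)

/-- A direction-consistent orientation: an orientation which agrees with the direction
`(s e, t e)` on every directed edge. -/
def DirConsistent {V E : Type*} (s t : E → V) (dir : E → Bool) (O : E → V × V) : Prop :=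
  IsOrientation s t O ∧ ∀ e, dir e = true → O e = (s e, t e)

/-- The magnetic equivariant boundary operator. -/
noncomputable def Bequ {V E : Type*} [DecidableEq V] (q : ℝ) (s t : E → V) (dir : E → Bool)
    (O : E → V × V) : Matrix V E ℂ :=
  Matrix.of fun v e =>
    if dir e then
      if v = s e then -Complex.exp (Complex.I * (Real.pi * q : ℂ))
      else if v = t e then Complex.exp (-(Complex.I * (Real.pi * q : ℂ)))
      else 0
    else
      if v = (O e).1 then -1
      else if v = (O e).2 then 1
      else 0

/-- The magnetic invariant boundary operator. -/
noncomputable def Binv {V E : Type*} [DecidableEq V] (q : ℝ) (s t : E → V) (dir : E → Bool) :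
    Matrix V E ℂ :=
  Matrix.of fun v e =>
    if dir e then
      if v = s e then Complex.exp (Complex.I * (Real.pi * q : ℂ))
      else if v = t e then Complex.exp (-(Complex.I * (Real.pi * q : ℂ)))
      else 0
    else
      if v = s e ∨ v = t e then 1 else 0

/-- The orientation-change matrix `Δ_{O,Ô}`. -/
noncomputable def Delta {V E : Type*} [DecidableEq V] [DecidableEq E] (O Ohat : E → V × V) :
    Matrix E E ℂ :=
  Matrix.diagonal fun e => if O e = Ohat e then 1 else -1

/-- The EIGN recursion: given boundary data `(q, s, t, dir)`, activations `σe, σi`,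
per-layer feature dimensions `de, di` (with intermediate node-level dimensions
`ke, kie, ki, kei`), per-layer node feature transformations `hequ, hie, hinv, hei`,
per-layer weight matrices, an orientation `O`, and inputs `Xe, Xi`, this returns for each
layer `l` the pair `(H^l_equ, H^l_inv)` of equivariant and invariant representations. -/
noncomputable def EIGN {V E : Type} [Fintype V] [Fintype E] [DecidableEq V]
    (q : ℝ) (s t : E → V) (dir : E → Bool)
    (σe σi : ℂ → ℂ)
    (de di ke kie ki kei : ℕ → ℕ)
    (hequ : ∀ l, Matrix V (Fin (de l)) ℂ → Matrix V (Fin (ke l)) ℂ)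
    (hie : ∀ l, Matrix V (Fin (di l)) ℂ → Matrix V (Fin (kie l)) ℂ)
    (hinv : ∀ l, Matrix V (Fin (di l)) ℂ → Matrix V (Fin (ki l)) ℂ)
    (hei : ∀ l, Matrix V (Fin (de l)) ℂ → Matrix V (Fin (kei l)) ℂ)
    (Wee : ∀ l, Matrix (Fin (ke l)) (Fin (de (l + 1))) ℂ)
    (Wie : ∀ l, Matrix (Fin (kie l)) (Fin (de (l + 1))) ℂ)
    (We : ∀ l, Matrix (Fin (de l)) (Fin (de (l + 1))) ℂ)
    (Wii : ∀ l, Matrix (Fin (ki l)) (Fin (di (l + 1))) ℂ)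
    (Wei : ∀ l, Matrix (Fin (kei l)) (Fin (di (l + 1))) ℂ)
    (Wi : ∀ l, Matrix (Fin (di l)) (Fin (di (l + 1))) ℂ)
    (WFee : ∀ l, Matrix (Fin (de (l + 1))) (Fin (de (l + 1))) ℂ)
    (WFie : ∀ l, Matrix (Fin (di (l + 1))) (Fin (de (l + 1))) ℂ)
    (WFii : ∀ l, Matrix (Fin (di (l + 1))) (Fin (di (l + 1))) ℂ)
    (WFei : ∀ l, Matrix (Fin (de (l + 1))) (Fin (di (l + 1))) ℂ)
    (O : E → V × V)
    (Xe : Matrix E (Fin (de 0)) ℂ) (Xi : Matrix E (Fin (di 0)) ℂ) :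
    (l : ℕ) → Matrix E (Fin (de l)) ℂ × Matrix E (Fin (di l)) ℂ
  | 0 => (Xe, Xi)
  | l + 1 =>
      let H := EIGN q s t dir σe σi de di ke kie ki kei hequ hie hinv hei
        Wee Wie We Wii Wei Wi WFee WFie WFii WFei O Xe Xi l
      let Ze := ((Bequ q s t dir O)ᴴ * hequ l (Bequ q s t dir O * H.1) * Wee l
                + (Bequ q s t dir O)ᴴ * hie l (Binv q s t dir * H.2) * Wie l
                + H.1 * We l).map σe
      let Zi := ((Binv q s t dir)ᴴ * hinv l (Binv q s t dir * H.2) * Wii l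
                + (Binv q s t dir)ᴴ * hei l (Bequ q s t dir O * H.1) * Wei l
                + H.2 * Wi l).map σi
      (((Ze * WFee l).hadamard (Zi * WFie l) + Ze).map σe,
       ((Zi * WFii l).hadamard ((Ze * WFei l).map fun z => ((‖z‖ : ℝ) : ℂ)) + Zi).map σi)

/-- The permutation matrix of a bijection `π : E ≃ E`:
`[P]_{e,e'} = 1` if `e = π e'` and `0` otherwise. -/
noncomputable def permMatrix {E : Type} [Fintype E] [DecidableEq E] (π : Equiv.Perm E) :
    Matrix E E ℂ :=
  Matrix.of fun e e' => if e = π e' then 1 else 0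

namespace Matrix

theorem submatrix_id_mul {α l m n p : Type*} [NonUnitalNonAssocSemiring α] [Fintype n]
    (A : Matrix m n α) (B : Matrix n p α) (f : l → m) :
    (A * B).submatrix f id = A.submatrix f id * B := by
  simpa using submatrix_mul A B f id id Function.bijective_id

end Matrix

theorem permMatrix_mul_eq_submatrix {E n : Type} [Fintype E] [DecidableEq E] (π : Equiv.Perm E)
    (M : Matrix E n ℂ) : permMatrix π * M = M.submatrix π.symm id := by
  have : permMatrix π = π.symm.toPEquiv.toMatrix := by
    ext e e'
    simp [permMatrix, PEquiv.toMatrix_apply, Equiv.eq_symm_apply, eq_comm]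
  rw [this, PEquiv.toMatrix_toPEquiv_mul]

theorem Bequ_comp {V E E' : Type*} [DecidableEq V] (q : ℝ) (s t : E → V) (dir : E → Bool)
    (O : E → V × V) (f : E' → E) :
    Bequ q (s ∘ f) (t ∘ f) (dir ∘ f) (O ∘ f) = (Bequ q s t dir O).submatrix id f :=
  rfl

theorem Binv_comp {V E E' : Type*} [DecidableEq V] (q : ℝ) (s t : E → V) (dir : E → Bool)
    (f : E' → E) : Binv q (s ∘ f) (t ∘ f) (dir ∘ f) = (Binv q s t dir).submatrix id f :=
  rfl

section Relabel

variable {V E E' : Type} [Fintype V] [Fintype E] [Fintype E'] [DecidableEq V]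
    (q : ℝ) (s t : E → V) (dir : E → Bool)
    (σe σi : ℂ → ℂ)
    (de di ke kie ki kei : ℕ → ℕ)
    (hequ : ∀ l, Matrix V (Fin (de l)) ℂ → Matrix V (Fin (ke l)) ℂ)
    (hie : ∀ l, Matrix V (Fin (di l)) ℂ → Matrix V (Fin (kie l)) ℂ)
    (hinv : ∀ l, Matrix V (Fin (di l)) ℂ → Matrix V (Fin (ki l)) ℂ)
    (hei : ∀ l, Matrix V (Fin (de l)) ℂ → Matrix V (Fin (kei l)) ℂ)
    (Wee : ∀ l, Matrix (Fin (ke l)) (Fin (de (l + 1))) ℂ)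
    (Wie : ∀ l, Matrix (Fin (kie l)) (Fin (de (l + 1))) ℂ)
    (We : ∀ l, Matrix (Fin (de l)) (Fin (de (l + 1))) ℂ)
    (Wii : ∀ l, Matrix (Fin (ki l)) (Fin (di (l + 1))) ℂ)
    (Wei : ∀ l, Matrix (Fin (kei l)) (Fin (di (l + 1))) ℂ)
    (Wi : ∀ l, Matrix (Fin (di l)) (Fin (di (l + 1))) ℂ)
    (WFee : ∀ l, Matrix (Fin (de (l + 1))) (Fin (de (l + 1))) ℂ)
    (WFie : ∀ l, Matrix (Fin (di (l + 1))) (Fin (de (l + 1))) ℂ)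
    (WFii : ∀ l, Matrix (Fin (di (l + 1))) (Fin (di (l + 1))) ℂ)
    (WFei : ∀ l, Matrix (Fin (de (l + 1))) (Fin (di (l + 1))) ℂ)
    (O : E → V × V)

theorem EIGN_comp_equiv (e : E' ≃ E) (Xe : Matrix E (Fin (de 0)) ℂ)
    (Xi : Matrix E (Fin (di 0)) ℂ) (l : ℕ) :
    EIGN q (s ∘ e) (t ∘ e) (dir ∘ e) σe σi de di ke kie ki kei hequ hie hinv hei
        Wee Wie We Wii Wei Wi WFee WFie WFii WFei (O ∘ e)
        (Xe.submatrix e id) (Xi.submatrix e id) l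
      = ((EIGN q s t dir σe σi de di ke kie ki kei hequ hie hinv hei
            Wee Wie We Wii Wei Wi WFee WFie WFii WFei O Xe Xi l).1.submatrix e id,
         (EIGN q s t dir σe σi de di ke kie ki kei hequ hie hinv hei
            Wee Wie We Wii Wei Wi WFee WFie WFii WFei O Xe Xi l).2.submatrix e id) := by
  induction l with
  | zero => rfl
  | succ l ih =>
    simp only [EIGN, ih, Bequ_comp, Binv_comp, submatrix_map, submatrix_hadamard, submatrix_add,
      Pi.add_apply, submatrix_id_mul, conjTranspose_submatrix, submatrix_mul_equiv,
      submatrix_id_id]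

end Relabel

theorem eign_outputs_permutation_equivariant_general
    {V E : Type} [Fintype V] [Fintype E] [DecidableEq V] [DecidableEq E]
    (q : ℝ) (s t : E → V) (dir : E → Bool)
    (σe σi : ℂ → ℂ)
    (de di ke kie ki kei : ℕ → ℕ)
    (hequ : ∀ l, Matrix V (Fin (de l)) ℂ → Matrix V (Fin (ke l)) ℂ)
    (hie : ∀ l, Matrix V (Fin (di l)) ℂ → Matrix V (Fin (kie l)) ℂ)
    (hinv : ∀ l, Matrix V (Fin (di l)) ℂ → Matrix V (Fin (ki l)) ℂ)
    (hei : ∀ l, Matrix V (Fin (de l)) ℂ → Matrix V (Fin (kei l)) ℂ)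
    (Wee : ∀ l, Matrix (Fin (ke l)) (Fin (de (l + 1))) ℂ)
    (Wie : ∀ l, Matrix (Fin (kie l)) (Fin (de (l + 1))) ℂ)
    (We : ∀ l, Matrix (Fin (de l)) (Fin (de (l + 1))) ℂ)
    (Wii : ∀ l, Matrix (Fin (ki l)) (Fin (di (l + 1))) ℂ)
    (Wei : ∀ l, Matrix (Fin (kei l)) (Fin (di (l + 1))) ℂ)
    (Wi : ∀ l, Matrix (Fin (di l)) (Fin (di (l + 1))) ℂ)
    (WFee : ∀ l, Matrix (Fin (de (l + 1))) (Fin (de (l + 1))) ℂ)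
    (WFie : ∀ l, Matrix (Fin (di (l + 1))) (Fin (de (l + 1))) ℂ)
    (WFii : ∀ l, Matrix (Fin (di (l + 1))) (Fin (di (l + 1))) ℂ)
    (WFei : ∀ l, Matrix (Fin (de (l + 1))) (Fin (di (l + 1))) ℂ)
    (O : E → V × V)
    (π : Equiv.Perm E)
    (Xe : Matrix E (Fin (de 0)) ℂ) (Xi : Matrix E (Fin (di 0)) ℂ) (L : ℕ) :
    (EIGN q (s ∘ π.symm) (t ∘ π.symm) (dir ∘ π.symm) σe σi de di ke kie ki kei
        hequ hie hinv hei Wee Wie We Wii Wei Wi WFee WFie WFii WFei (O ∘ π.symm)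
        (permMatrix π * Xe) (permMatrix π * Xi) L).1
      = permMatrix π *
        (EIGN q s t dir σe σi de di ke kie ki kei hequ hie hinv hei
          Wee Wie We Wii Wei Wi WFee WFie WFii WFei O Xe Xi L).1
    ∧
    (EIGN q (s ∘ π.symm) (t ∘ π.symm) (dir ∘ π.symm) σe σi de di ke kie ki kei
        hequ hie hinv hei Wee Wie We Wii Wei Wi WFee WFie WFii WFei (O ∘ π.symm)
        (permMatrix π * Xe) (permMatrix π * Xi) L).2
      = permMatrix π *
        (EIGN q s t dir σe σi de di ke kie ki kei hequ hie hinv hei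
          Wee Wie We Wii Wei Wi WFee WFie WFii WFei O Xe Xi L).2 := by
  simp only [permMatrix_mul_eq_submatrix, EIGN_comp_equiv, and_self]

/-- Both EIGN outputs are permutation equivariant: running the same EIGN recursion on the
permuted graph (endpoints `s ∘ π⁻¹, t ∘ π⁻¹`, directed edges `π(E_D)`, orientation
`O ∘ π⁻¹`) with permuted inputs `P·X_equ, P·X_inv` yields `P·H^L_equ` and `P·H^L_inv`. -/
theorem eign_outputs_permutation_equivariant
    {V E : Type} [Fintype V] [Fintype E] [DecidableEq V] [DecidableEq E]
    (q : ℝ) (s t : E → V) (dir : E → Bool)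
    (σe σi : ℂ → ℂ) (hσe : ∀ x, σe (-x) = -σe x)
    (de di ke kie ki kei : ℕ → ℕ)
    (hequ : ∀ l, Matrix V (Fin (de l)) ℂ → Matrix V (Fin (ke l)) ℂ)
    (hie : ∀ l, Matrix V (Fin (di l)) ℂ → Matrix V (Fin (kie l)) ℂ)
    (hinv : ∀ l, Matrix V (Fin (di l)) ℂ → Matrix V (Fin (ki l)) ℂ)
    (hei : ∀ l, Matrix V (Fin (de l)) ℂ → Matrix V (Fin (kei l)) ℂ)
    (Wee : ∀ l, Matrix (Fin (ke l)) (Fin (de (l + 1))) ℂ)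
    (Wie : ∀ l, Matrix (Fin (kie l)) (Fin (de (l + 1))) ℂ)
    (We : ∀ l, Matrix (Fin (de l)) (Fin (de (l + 1))) ℂ)
    (Wii : ∀ l, Matrix (Fin (ki l)) (Fin (di (l + 1))) ℂ)
    (Wei : ∀ l, Matrix (Fin (kei l)) (Fin (di (l + 1))) ℂ)
    (Wi : ∀ l, Matrix (Fin (di l)) (Fin (di (l + 1))) ℂ)
    (WFee : ∀ l, Matrix (Fin (de (l + 1))) (Fin (de (l + 1))) ℂ)
    (WFie : ∀ l, Matrix (Fin (di (l + 1))) (Fin (de (l + 1))) ℂ)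
    (WFii : ∀ l, Matrix (Fin (di (l + 1))) (Fin (di (l + 1))) ℂ)
    (WFei : ∀ l, Matrix (Fin (de (l + 1))) (Fin (di (l + 1))) ℂ)
    (O : E → V × V) (hO : IsOrientation s t O)
    (π : Equiv.Perm E)
    (Xe : Matrix E (Fin (de 0)) ℂ) (Xi : Matrix E (Fin (di 0)) ℂ) (L : ℕ) :
    (EIGN q (s ∘ π.symm) (t ∘ π.symm) (dir ∘ π.symm) σe σi de di ke kie ki kei
        hequ hie hinv hei Wee Wie We Wii Wei Wi WFee WFie WFii WFei (O ∘ π.symm)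
        (permMatrix π * Xe) (permMatrix π * Xi) L).1
      = permMatrix π *
        (EIGN q s t dir σe σi de di ke kie ki kei hequ hie hinv hei
          Wee Wie We Wii Wei Wi WFee WFie WFii WFei O Xe Xi L).1
    ∧
    (EIGN q (s ∘ π.symm) (t ∘ π.symm) (dir ∘ π.symm) σe σi de di ke kie ki kei
        hequ hie hinv hei Wee Wie We Wii Wei Wi WFee WFie WFii WFei (O ∘ π.symm)
        (permMatrix π * Xe) (permMatrix π * Xi) L).2
      = permMatrix π *
        (EIGN q s t dir σe σi de di ke kie ki kei hequ hie hinv hei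
          Wee Wie We Wii Wei Wi WFee WFie WFii WFei O Xe Xi L).2 :=
  eign_outputs_permutation_equivariant_general q s t dir σe σi de di ke kie ki kei hequ hie hinv hei
    Wee Wie We Wii Wei Wi WFee WFie WFii WFei O π Xe Xi L
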